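/- For every finite message passing automaton (FCMPA) over Π with state set Q, there is an equivalent unrestricted floating-point GNN of dimension |Q|² that simulates it exactly: there is an injective encoding of states as one-hot vectors and an encoding of the functions δ_M : Q → Q (q ↦ δ(q, M)) as 0-1 vectors of length |Q|², together with aggregation and combination functions over the floating-point vectors, such that for every finite pointed Π-labeled graph (G, w) and every round n, the automaton is in state qᵢ at w in round n if and only if the GNN's feature vector at w in round n is the one-hot encoding of qᵢ; consequently the GNN accepts exactly the pointed graphs accepted by the automaton. -/
import Mathlib


/-- A finite directed node-labeled graph: finite node set `V`, out-neighbour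
finsets `adj v`, and a labeling of nodes by sets of node label symbols from `α`. -/
structure LGraph (α : Type) : Type 1 where
  V : Type
  fintypeV : Fintype V
  adj : V → Finset V
  label : V → Set α

attribute [instance] LGraph.fintypeV

/-- A counting message passing automaton (CMPA) over node label symbols `α` with state
set `Q`: an initialization function from label sets to states, a transition function taking
the current state and the multiset of out-neighbour states, and accepting states `F`. -/
structure CMPA (α Q : Type) where
  init : Set α → Q
  trans : Q → Multiset Q → Q
  F : Set Q

/-- The state of a node at each round: round 0 is given by the initialization function on
the node's labels, and round `n+1` applies the transition function to the node's round-`n`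
state and the multiset of round-`n` states of its out-neighbours. -/
def CMPA.state {α Q : Type} (A : CMPA α Q) (G : LGraph α) : ℕ → G.V → Q
  | 0, v => A.init (G.label v)
  | n + 1, v => A.trans (A.state G n v) ((G.adj v).val.map (A.state G n))

/-- The CMPA accepts `(G, w)` iff `w` visits an accepting state at some round. -/
def CMPA.accepts {α Q : Type} (A : CMPA α Q) (G : LGraph α) (w : G.V) : Prop :=
  ∃ n : ℕ, A.state G n w ∈ A.F

/-- A (recurrent) graph neural network over feature values `S` with dimension `d`:
an initialization function from label sets to feature vectors, an aggregation function on
multisets of feature vectors, a combination function, and a set of accepting vectors. -/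
structure FGNN (α S : Type) (d : ℕ) where
  init : Set α → (Fin d → S)
  agg : Multiset (Fin d → S) → (Fin d → S)
  comb : (Fin d → S) → (Fin d → S) → (Fin d → S)
  acc : Set (Fin d → S)

/-- The feature vector of a node at each round:
`x_v⁰ = init (label v)` and `x_v^{t+1} = comb (x_v^t) (agg {{ x_u^t : (v,u) ∈ E }})`. -/
def FGNN.state {α S : Type} {d : ℕ} (N : FGNN α S d) (G : LGraph α) : ℕ → G.V → (Fin d → S)
  | 0, v => N.init (G.label v)
  | n + 1, v => N.comb (N.state G n v) (N.agg ((G.adj v).val.map (N.state G n)))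

/-- The GNN accepts `(G, w)` iff `w` visits an accepting feature vector at some round. -/
def FGNN.accepts {α S : Type} {d : ℕ} (N : FGNN α S d) (G : LGraph α) (w : G.V) : Prop :=
  ∃ n : ℕ, N.state G n w ∈ N.acc

/-- For every finite counting message passing automaton over `α` with state
set `Q`, and every feature value type `S` with two distinguished distinct values `z` ("0") and
`o` ("1"), there is a GNN of dimension `|Q|²` over `S` together with a one-hot encoding of
states (each state is encoded by a 0-1 vector with exactly one coordinate equal to `o`) that
simulates the automaton exactly: at every round and node the GNN's feature vector is the
encoding of the automaton's state, and the GNN accepts exactly the pointed graphs accepted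
by the automaton. -/
theorem fcmpa_to_unrestricted_float_gnn
    {α : Type} (Q : Type) [Fintype Q] (A : CMPA α Q)
    (S : Type) (z o : S) (hzo : z ≠ o) :
    ∃ (N : FGNN α S (Fintype.card Q * Fintype.card Q))
      (enc : Q → (Fin (Fintype.card Q * Fintype.card Q) → S)),
      Function.Injective enc ∧
      (∀ q i, enc q i = z ∨ enc q i = o) ∧
      (∀ q, ∃! i, enc q i = o) ∧
      (∀ (G : LGraph α) (n : ℕ) (v : G.V), N.state G n v = enc (A.state G n v)) ∧
      (∀ (G : LGraph α) (w : G.V), N.accepts G w ↔ A.accepts G w) := by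
  classical
  set n := Fintype.card Q with hn
  have hQ : Nonempty Q := ⟨A.init ∅⟩
  have hpos : 0 < n := Fintype.card_pos_iff.mpr hQ
  let e : Q ≃ Fin n := Fintype.equivFin Q
  -- state index embedding
  let idx : Q → Fin (n * n) := fun q => ⟨(e q).val, lt_of_lt_of_le (e q).isLt (Nat.le_mul_of_pos_left n hpos)⟩
  have idx_inj : Function.Injective idx := by
    intro a b h
    simp only [idx, Fin.mk.injEq] at h
    exact e.injective (Fin.ext h)
  -- one-hot encoding
  let enc : Q → (Fin (n * n) → S) := fun q i => if i = idx q then o else z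
  have enc_inj : Function.Injective enc := by
    intro a b h
    have h1 : enc a (idx a) = enc b (idx a) := congrFun h _
    simp only [enc, if_pos rfl] at h1
    by_cases hab : idx a = idx b
    · exact idx_inj hab
    · rw [if_neg hab] at h1
      exact absurd h1.symm hzo
  -- decode
  let dec : (Fin (n * n) → S) → Q := fun x =>
    if h : ∃ q, enc q = x then h.choose else A.init ∅
  have dec_enc : ∀ q, dec (enc q) = q := by
    intro q
    have h : ∃ p, enc p = enc q := ⟨q, rfl⟩
    simp only [dec, dif_pos h]
    exact enc_inj h.choose_spec
  -- function encoding
  let dfun : (Q → Q) → (Fin (n * n) → S) := fun f k =>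
    if (e (f (e.symm ⟨k.val / n, Nat.div_lt_of_lt_mul k.isLt⟩))).val = k.val % n then o else z
  have dfun_inj : Function.Injective dfun := by
    intro f g h
    funext q
    set i := e q with hi
    have hk : (i.val * n + (e (f q)).val) < n * n := by
      calc i.val * n + (e (f q)).val < i.val * n + n := by
            exact Nat.add_lt_add_left (e (f q)).isLt _
        _ = (i.val + 1) * n := by ring
        _ ≤ n * n := Nat.mul_le_mul_right n i.isLt
    set k : Fin (n * n) := ⟨i.val * n + (e (f q)).val, hk⟩ with hkdef
    have hdiv : k.val / n = i.val := by
      show (i.val * n + (e (f q)).val) / n = i.val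
      rw [Nat.add_comm, Nat.add_mul_div_right _ _ hpos,
        Nat.div_eq_of_lt (e (f q)).isLt, Nat.zero_add]
    have hmod : k.val % n = (e (f q)).val := by
      show (i.val * n + (e (f q)).val) % n = (e (f q)).val
      rw [Nat.add_comm, Nat.add_mul_mod_self_right, Nat.mod_eq_of_lt (e (f q)).isLt]
    have hfk : dfun f k = o := by
      simp only [dfun]
      rw [if_pos]
      have : (⟨k.val / n, Nat.div_lt_of_lt_mul k.isLt⟩ : Fin n) = i := by
        exact Fin.ext hdiv
      rw [this, hi, e.symm_apply_apply, hmod]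
    have hgk : dfun g k = o := by rw [← h]; exact hfk
    simp only [dfun] at hgk
    by_cases hc : (e (g (e.symm ⟨k.val / n, Nat.div_lt_of_lt_mul k.isLt⟩))).val = k.val % n
    · have hfin : (⟨k.val / n, Nat.div_lt_of_lt_mul k.isLt⟩ : Fin n) = i := Fin.ext hdiv
      rw [hfin, hi, e.symm_apply_apply, hmod] at hc
      exact (e.injective (Fin.val_injective hc)).symm ▸ rfl
    · rw [if_neg hc] at hgk; exact absurd hgk hzo
  let decF : (Fin (n * n) → S) → (Q → Q) := fun y =>
    if h : ∃ f, dfun f = y then h.choose else id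
  have decF_dfun : ∀ f, decF (dfun f) = f := by
    intro f
    have h : ∃ g, dfun g = dfun f := ⟨f, rfl⟩
    simp only [decF, dif_pos h]
    exact dfun_inj h.choose_spec
  -- the GNN
  let N : FGNN α S (n * n) :=
    { init := fun l => enc (A.init l)
      agg := fun M => dfun (fun q => A.trans q (M.map dec))
      comb := fun x y => enc (decF y (dec x))
      acc := enc '' A.F }
  have hsim : ∀ (G : LGraph α) (m : ℕ) (v : G.V), N.state G m v = enc (A.state G m v) := by
    intro G m
    induction m with
    | zero => intro v; rfl
    | succ m ih =>
      intro v
      show N.comb (N.state G m v) (N.agg ((G.adj v).val.map (N.state G m)))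
        = enc (A.trans (A.state G m v) ((G.adj v).val.map (A.state G m)))
      have hmap : (G.adj v).val.map (N.state G m) = (G.adj v).val.map (enc ∘ A.state G m) := by
        apply Multiset.map_congr rfl
        intro u _; exact ih u
      rw [ih v, hmap]
      show enc (decF (dfun fun q => A.trans q
          (((G.adj v).val.map (enc ∘ A.state G m)).map dec)) (dec (enc (A.state G m v))))
        = _
      have h1 := decF_dfun (fun q => A.trans q
          (Multiset.map dec (Multiset.map (enc ∘ A.state G m) (G.adj v).val)))
      rw [h1, dec_enc]
      rw [Multiset.map_map]
      have h2 : dec ∘ (enc ∘ A.state G m) = A.state G m := by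
        funext u; simp [dec_enc]
      rw [h2]
  refine ⟨N, enc, enc_inj, ?_, ?_, hsim, ?_⟩
  · intro q i
    by_cases h : i = idx q
    · right; simp [enc, h]
    · left; simp [enc, h]
  · intro q
    refine ⟨idx q, by simp [enc], ?_⟩
    intro i hi
    by_contra h
    simp only [enc, if_neg h] at hi
    exact hzo hi
  · intro G w
    unfold FGNN.accepts CMPA.accepts
    constructor
    · rintro ⟨m, hm⟩
      rw [hsim] at hm
      obtain ⟨q, hq, heq⟩ := hm
      exact ⟨m, (enc_inj heq) ▸ hq⟩
    · rintro ⟨m, hm⟩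
      exact ⟨m, by rw [hsim]; exact ⟨_, hm, rfl⟩⟩
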